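/- Let λ > 0. For each integer k ≥ 1 let W_k be a ℤ≥0-valued random variable with E[W_k] < ∞ and P[W_k = k] > 0 such that E[(W_k − λ) g(W_k)] = E[(λ + 1{W_k = k}) (g(W_k+1) − g(W_k))] for every bounded g : ℤ≥0 → ℝ. Then sup_{A ⊆ ℤ≥0} sup_{k ≥ 1} |g_A(k+1) − g_A(k)| = sup_{k ≥ 1} d_TV(L(W_k), Po(λ)) / P[W_k = k], where g_A is the canonical solution of the Stein equation, g_A(0) = 0 and g_A(j+1) = (j! / λ^{j+1}) Σ_{i=0}^{j} (1_A(i) − Po(λ)(A)) λ^i / i!. -/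

import Mathlib

/-
Take `g = g_A` in the perturbed Stein identity for `W_k`. As `g_A` is bounded and solves the Stein
equation `λ g(j+1) − j g(j) = 1_A(j) − Po(λ)(A)`, the identity turns into
`P[W_k ∈ A] − Po(λ)(A) = −P[W_k = k] (g_A(k+1) − g_A(k))`. So `|g_A(k+1) − g_A(k)|` equals the ratio
`|P[W_k ∈ A] − Po(λ)(A)| / P[W_k = k]` for every `A` and every `k`, and the two suprema agree once
their order is exchanged, which is legitimate in `ℝ` because `|g_A| ≤ e^λ` uniformly in `A`.
-/

open MeasureTheory

/-- `Po(λ)(A) = Σ_{j ∈ A} e^{−λ} λ^j / j!`. -/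
noncomputable def poissonProb (lam : ℝ) (A : Set ℕ) : ℝ :=
  ∑' j : ℕ, Set.indicator A (fun j => Real.exp (-lam) * lam ^ j / (Nat.factorial j : ℝ)) j

/-- The canonical solution of the Poisson Stein equation for the test function `1_A`:
`g_A(0) = 0` and `g_A(j+1) = (j!/λ^{j+1}) Σ_{i=0}^{j} (1_A(i) − Po(λ)(A)) λ^i / i!`. -/
noncomputable def steinSol (lam : ℝ) (A : Set ℕ) : ℕ → ℝ
  | 0 => 0
  | (j + 1) => (Nat.factorial j : ℝ) / lam ^ (j + 1) *
      ∑ i ∈ Finset.range (j + 1),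
        (Set.indicator A (fun _ => (1 : ℝ)) i - poissonProb lam A) * lam ^ i /
          (Nat.factorial i : ℝ)

open Finset

lemma ciSup_comm_of_bddAbove {α ι κ : Type*} [ConditionallyCompleteLattice α] {f : ι → κ → α}
    (hf : BddAbove (Set.range fun p : ι × κ => f p.1 p.2)) :
    ⨆ i, ⨆ j, f i j = ⨆ j, ⨆ i, f i j := by
  have hf' : BddAbove (Set.range fun p : κ × ι => f p.2 p.1) := by
    rwa [← (Equiv.prodComm κ ι).surjective.range_comp] at hf
  rw [← ciSup_prod hf, ← ciSup_prod hf', ← (Equiv.prodComm κ ι).iSup_comp]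
  rfl

section Poisson

variable {lam : ℝ}

lemma hasSum_pow_div_factorial (lam : ℝ) :
    HasSum (fun i : ℕ => lam ^ i / (i.factorial : ℝ)) (Real.exp lam) :=
  Real.exp_eq_exp_ℝ ▸ NormedSpace.expSeries_div_hasSum_exp lam

lemma hasSum_poisson (lam : ℝ) :
    HasSum (fun j : ℕ => Real.exp (-lam) * lam ^ j / (j.factorial : ℝ)) 1 := by
  simpa only [mul_div_assoc, ← Real.exp_add, neg_add_cancel, Real.exp_zero] using
    (hasSum_pow_div_factorial lam).mul_left (Real.exp (-lam))

lemma hasSum_poissonProb (lam : ℝ) (A : Set ℕ) :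
    HasSum (A.indicator fun j => Real.exp (-lam) * lam ^ j / (j.factorial : ℝ))
      (poissonProb lam A) :=
  ((hasSum_poisson lam).summable.indicator A).hasSum

lemma poissonProb_nonneg (hlam : 0 ≤ lam) (A : Set ℕ) : 0 ≤ poissonProb lam A :=
  (hasSum_poissonProb lam A).nonneg fun j => Set.indicator_nonneg (fun j _ => by positivity) j

lemma poissonProb_le_one (hlam : 0 ≤ lam) (A : Set ℕ) : poissonProb lam A ≤ 1 :=
  hasSum_le (fun j => Set.indicator_le_self' (fun j _ => by positivity) j)
    (hasSum_poissonProb lam A) (hasSum_poisson lam)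

end Poisson

section SteinSolution

variable {lam : ℝ}

noncomputable def steinSummand (lam : ℝ) (A : Set ℕ) (i : ℕ) : ℝ :=
  (A.indicator (fun _ => (1 : ℝ)) i - poissonProb lam A) * lam ^ i / (i.factorial : ℝ)

lemma steinSol_succ (lam : ℝ) (A : Set ℕ) (j : ℕ) :
    steinSol lam A (j + 1) =
      (j.factorial : ℝ) / lam ^ (j + 1) * ∑ i ∈ range (j + 1), steinSummand lam A i :=
  rfl

lemma hasSum_steinSummand (lam : ℝ) (A : Set ℕ) : HasSum (steinSummand lam A) 0 := by
  have hsummand : ∀ i, steinSummand lam A i =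
      Real.exp lam * A.indicator (fun j => Real.exp (-lam) * lam ^ j / (j.factorial : ℝ)) i
        - poissonProb lam A * (lam ^ i / (i.factorial : ℝ)) := by
    intro i
    by_cases hi : i ∈ A
    · simp only [steinSummand, Set.indicator_of_mem hi, Real.exp_neg]
      field_simp
    · simp only [steinSummand, Set.indicator_of_notMem hi]
      ring
  have hsum := ((hasSum_poissonProb lam A).mul_left (Real.exp lam)).sub
    ((hasSum_pow_div_factorial lam).mul_left (poissonProb lam A))
  rwa [mul_comm, sub_self, ← funext hsummand] at hsum

lemma abs_steinSummand_le (hlam : 0 ≤ lam) (A : Set ℕ) (i : ℕ) :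
    |steinSummand lam A i| ≤ lam ^ i / (i.factorial : ℝ) := by
  have hA : |A.indicator (fun _ => (1 : ℝ)) i - poissonProb lam A| ≤ 1 := by
    have h₀ := poissonProb_nonneg hlam A
    have h₁ := poissonProb_le_one hlam A
    by_cases hi : i ∈ A
    · rw [Set.indicator_of_mem hi, abs_le]
      constructor <;> linarith
    · rwa [Set.indicator_of_notMem hi, zero_sub, abs_neg, abs_of_nonneg h₀]
  rw [steinSummand, mul_div_assoc, abs_mul, abs_of_nonneg (by positivity : 0 ≤ lam ^ i / _)]
  exact mul_le_of_le_one_left (by positivity) hA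

lemma pow_div_factorial_add_le (hlam : 0 ≤ lam) (i j : ℕ) :
    lam ^ (i + j) / ((i + j).factorial : ℝ)
      ≤ lam ^ i / (i.factorial : ℝ) * (lam ^ j / (j.factorial : ℝ)) := by
  have hfact : (i.factorial : ℝ) * j.factorial ≤ (i + j).factorial := by
    exact_mod_cast Nat.le_of_dvd (Nat.factorial_pos _)
      (Nat.factorial_mul_factorial_dvd_factorial_add i j)
  rw [div_mul_div_comm, ← pow_add]
  exact div_le_div_of_nonneg_left (by positivity) (by positivity) hfact

lemma abs_sum_range_steinSummand_le (hlam : 0 ≤ lam) (A : Set ℕ) (j : ℕ) :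
    |∑ i ∈ range j, steinSummand lam A i| ≤ lam ^ j / (j.factorial : ℝ) * Real.exp lam := by
  have htail : HasSum (fun i => steinSummand lam A (i + j))
      (-∑ i ∈ range j, steinSummand lam A i) := by
    simpa using (hasSum_nat_add_iff' j).2 (hasSum_steinSummand lam A)
  simpa using htail.norm_le_of_bounded ((hasSum_pow_div_factorial lam).mul_left _) fun i =>
    (abs_steinSummand_le hlam A (i + j)).trans
      ((pow_div_factorial_add_le hlam i j).trans_eq (mul_comm _ _))

lemma abs_steinSol_le (hlam : 0 < lam) (A : Set ℕ) (j : ℕ) : |steinSol lam A j| ≤ Real.exp lam := by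
  cases j with
  | zero => simpa [steinSol] using (Real.exp_pos lam).le
  | succ j =>
    rw [steinSol_succ, abs_mul, abs_of_nonneg (by positivity)]
    calc (j.factorial : ℝ) / lam ^ (j + 1) * |∑ i ∈ range (j + 1), steinSummand lam A i|
        ≤ (j.factorial : ℝ) / lam ^ (j + 1)
            * (lam ^ (j + 1) / ((j + 1).factorial : ℝ) * Real.exp lam) := by
          gcongr
          exact abs_sum_range_steinSummand_le hlam.le A (j + 1)
      _ = Real.exp lam / (j + 1) := by
          rw [Nat.factorial_succ]
          push_cast
          field_simp
      _ ≤ Real.exp lam := div_le_self (Real.exp_pos lam).le (by linarith [j.cast_nonneg (α := ℝ)])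

lemma abs_steinSol_succ_sub_le (hlam : 0 < lam) (A : Set ℕ) (j : ℕ) :
    |steinSol lam A (j + 1) - steinSol lam A j| ≤ 2 * Real.exp lam :=
  (abs_sub _ _).trans (by linarith [abs_steinSol_le hlam A (j + 1), abs_steinSol_le hlam A j])

def steinOperator (lam : ℝ) (g : ℕ → ℝ) (j : ℕ) : ℝ :=
  lam * g (j + 1) - j * g j

lemma steinOperator_steinSol (hlam : lam ≠ 0) (A : Set ℕ) (j : ℕ) :
    steinOperator lam (steinSol lam A) j
      = A.indicator (fun _ => (1 : ℝ)) j - poissonProb lam A := by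
  cases j with
  | zero =>
    simp only [steinOperator, steinSol_succ, steinSummand, range_one, sum_singleton,
      Nat.factorial_zero, Nat.cast_zero, Nat.cast_one, pow_zero, pow_one, zero_add, zero_mul,
      sub_zero]
    field_simp
  | succ j =>
    rw [steinOperator, steinSol_succ, steinSol_succ, sum_range_succ, steinSummand,
      Nat.factorial_succ]
    push_cast
    field_simp
    ring

end SteinSolution

section PerturbedStein

variable {Ω : Type*} [MeasurableSpace Ω] {P : Measure Ω} {W : Ω → ℕ} {lam : ℝ} {k : ℕ}

def PerturbedSteinIdentity (P : Measure Ω) (lam : ℝ) (k : ℕ) (W : Ω → ℕ) : Prop :=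
  ∀ g : ℕ → ℝ, (∃ C : ℝ, ∀ j : ℕ, |g j| ≤ C) →
    ∫ ω, ((W ω : ℝ) - lam) * g (W ω) ∂P =
      ∫ ω, (lam + if W ω = k then (1 : ℝ) else 0) * (g (W ω + 1) - g (W ω)) ∂P

lemma integrable_comp_of_abs_le [IsFiniteMeasure P] (hW : Measurable W) {h : ℕ → ℝ} {C : ℝ}
    (hC : ∀ j, |h j| ≤ C) : Integrable (fun ω => h (W ω)) P :=
  .of_bound (measurable_from_nat.comp hW).aestronglyMeasurable C (ae_of_all _ fun ω => hC (W ω))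

lemma integral_steinOperator_comp [IsFiniteMeasure P] (hW : Measurable W)
    (hint : Integrable (fun ω => (W ω : ℝ)) P) (hstein : PerturbedSteinIdentity P lam k W)
    {g : ℕ → ℝ} {C : ℝ} (hg : ∀ j, |g j| ≤ C) :
    ∫ ω, steinOperator lam g (W ω) ∂P = -(P.real {ω | W ω = k} * (g (k + 1) - g k)) := by
  have hΔ : ∀ j, |g (j + 1) - g j| ≤ 2 * C := fun j =>
    (abs_sub _ _).trans (by linarith [hg (j + 1), hg j])
  have hC : 0 ≤ C := (abs_nonneg _).trans (hg 0)
  have hk : MeasurableSet {ω | W ω = k} := hW (measurableSet_singleton k)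
  have hdrift : Integrable (fun ω => lam * (g (W ω + 1) - g (W ω))) P :=
    integrable_comp_of_abs_le hW (C := |lam| * (2 * C)) fun j => by
      rw [abs_mul]; exact mul_le_mul_of_nonneg_left (hΔ j) (abs_nonneg lam)
  have hperturbed : Integrable
      (fun ω => (lam + if W ω = k then (1 : ℝ) else 0) * (g (W ω + 1) - g (W ω))) P :=
    integrable_comp_of_abs_le hW
      (h := fun j => (lam + if j = k then (1 : ℝ) else 0) * (g (j + 1) - g j))
      (C := (|lam| + 1) * (2 * C)) fun j => by
      rw [abs_mul]
      refine mul_le_mul ((abs_add_le _ _).trans ?_) (hΔ j) (abs_nonneg _) (by positivity)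
      split_ifs <;> simp
  have hcentred : Integrable (fun ω => ((W ω : ℝ) - lam) * g (W ω)) P :=
    (hint.sub (integrable_const lam)).mul_bdd (measurable_from_nat.comp hW).aestronglyMeasurable
      (ae_of_all _ fun ω => hg (W ω))
  have hoperator : ∀ ω, steinOperator lam g (W ω)
      = lam * (g (W ω + 1) - g (W ω)) - ((W ω : ℝ) - lam) * g (W ω) := fun ω => by
    rw [steinOperator]; ring
  have hdifference : ∀ ω, lam * (g (W ω + 1) - g (W ω))
      - (lam + if W ω = k then (1 : ℝ) else 0) * (g (W ω + 1) - g (W ω))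
      = -{ω | W ω = k}.indicator (fun _ => g (k + 1) - g k) ω := fun ω => by
    by_cases hω : W ω = k
    · simp only [hω, if_true, Set.indicator_of_mem (show ω ∈ {ω | W ω = k} from hω)]
      ring
    · simp [hω]
  calc ∫ ω, steinOperator lam g (W ω) ∂P
      = ∫ ω, lam * (g (W ω + 1) - g (W ω)) ∂P - ∫ ω, ((W ω : ℝ) - lam) * g (W ω) ∂P := by
        simp_rw [hoperator]; exact integral_sub hdrift hcentred
    _ = ∫ ω, lam * (g (W ω + 1) - g (W ω)) ∂P
          - ∫ ω, (lam + if W ω = k then (1 : ℝ) else 0) * (g (W ω + 1) - g (W ω)) ∂P := by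
        rw [hstein g ⟨C, hg⟩]
    _ = -(P.real {ω | W ω = k} * (g (k + 1) - g k)) := by
        rw [← integral_sub hdrift hperturbed, integral_congr_ae (ae_of_all _ hdifference),
          integral_neg, integral_indicator_const _ hk, smul_eq_mul]

lemma measureReal_sub_poissonProb_eq [IsProbabilityMeasure P] (hlam : 0 < lam)
    (hW : Measurable W) (hint : Integrable (fun ω => (W ω : ℝ)) P)
    (hstein : PerturbedSteinIdentity P lam k W) (A : Set ℕ) :
    P.real {ω | W ω ∈ A} - poissonProb lam A
      = -(P.real {ω | W ω = k} * (steinSol lam A (k + 1) - steinSol lam A k)) := by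
  have hA : ∫ ω, A.indicator (fun _ => (1 : ℝ)) (W ω) ∂P = P.real {ω | W ω ∈ A} := by
    simp_rw [← Set.indicator_comp_right]
    exact (integral_indicator_const (1 : ℝ) (hW (MeasurableSet.of_discrete (s := A)))).trans
      (mul_one _)
  calc P.real {ω | W ω ∈ A} - poissonProb lam A
      = ∫ ω, (A.indicator (fun _ => (1 : ℝ)) (W ω) - poissonProb lam A) ∂P := by
        rw [integral_sub _ (integrable_const _), hA, integral_const, probReal_univ, one_smul]
        exact integrable_comp_of_abs_le hW (C := 1) fun j => by
          by_cases hj : j ∈ A <;> simp [hj]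
    _ = ∫ ω, steinOperator lam (steinSol lam A) (W ω) ∂P := by
        simp_rw [steinOperator_steinSol hlam.ne']
    _ = _ := integral_steinOperator_comp hW hint hstein (abs_steinSol_le hlam A)

lemma abs_steinSol_succ_sub_eq_div [IsProbabilityMeasure P] (hlam : 0 < lam)
    (hW : Measurable W) (hint : Integrable (fun ω => (W ω : ℝ)) P)
    (hstein : PerturbedSteinIdentity P lam k W) (hpos : 0 < P.real {ω | W ω = k}) (A : Set ℕ) :
    |steinSol lam A (k + 1) - steinSol lam A k|
      = |P.real {ω | W ω ∈ A} - poissonProb lam A| / P.real {ω | W ω = k} := by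
  rw [eq_div_iff hpos.ne', measureReal_sub_poissonProb_eq hlam hW hint hstein, abs_neg, abs_mul,
    abs_of_pos hpos, mul_comm]

end PerturbedStein

/-- Let `λ > 0` and for each integer `k ≥ 1` let `W_k` be a `ℕ`-valued random
variable with `E[W_k] < ∞` and `P[W_k = k] > 0` satisfying the perturbed Stein identity
`E[(W_k − λ) g(W_k)] = E[(λ + 1{W_k = k})(g(W_k+1) − g(W_k))]` for all bounded `g`.
Then `sup_{A} sup_{k ≥ 1} |g_A(k+1) − g_A(k)| = sup_{k ≥ 1} d_TV(L(W_k), Po(λ)) / P[W_k = k]`. -/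
theorem steinFactor_eq_sup_dTV_ratio
    {Ω : Type*} [MeasurableSpace Ω] (P : Measure Ω) [IsProbabilityMeasure P]
    (lam : ℝ) (hlam : 0 < lam)
    (W : ℕ → Ω → ℕ) (hW : ∀ k, Measurable (W k))
    (hint : ∀ k, 1 ≤ k → Integrable (fun ω => (W k ω : ℝ)) P)
    (hpos : ∀ k, 1 ≤ k → 0 < (P {ω | W k ω = k}).toReal)
    (hstein : ∀ k, 1 ≤ k → ∀ g : ℕ → ℝ, (∃ C : ℝ, ∀ j : ℕ, |g j| ≤ C) →
      ∫ ω, ((W k ω : ℝ) - lam) * g (W k ω) ∂P =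
        ∫ ω, (lam + if W k ω = k then (1 : ℝ) else 0) * (g (W k ω + 1) - g (W k ω)) ∂P) :
    (⨆ A : Set ℕ, ⨆ k : {k : ℕ // 1 ≤ k},
        |steinSol lam A (k.1 + 1) - steinSol lam A k.1|) =
      ⨆ k : {k : ℕ // 1 ≤ k},
        (⨆ A : Set ℕ, |(P {ω | W k.1 ω ∈ A}).toReal - poissonProb lam A|) /
          (P {ω | W k.1 ω = k.1}).toReal := by
  have hbdd : BddAbove (Set.range fun p : Set ℕ × {k : ℕ // 1 ≤ k} =>
      |steinSol lam p.1 (p.2.1 + 1) - steinSol lam p.1 p.2.1|) :=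
    ⟨2 * Real.exp lam, Set.forall_mem_range.2 fun p => abs_steinSol_succ_sub_le hlam p.1 p.2.1⟩
  rw [ciSup_comm_of_bddAbove hbdd]
  refine iSup_congr fun k => ?_
  rw [div_eq_mul_inv, Real.iSup_mul_of_nonneg (inv_nonneg.2 (hpos k k.2).le)]
  refine iSup_congr fun A => ?_
  rw [← div_eq_mul_inv]
  exact abs_steinSol_succ_sub_eq_div hlam (hW k) (hint k k.2) (hstein k k.2) (hpos k k.2) A
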